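/- Let n = 3 and let c ∈ F_{2^3} with c ≠ 0 and c ≠ 1. Then for all a, b ∈ F_{2^3}, the c-DDT entry of the (0,1)-swapped inverse function satisfies Δ_c(a,b) ≤ 3. -/
import Mathlib


open Finset

/-- The (0,1)-swapped inverse function on a field of characteristic 2 with `2^n` elements:
`G(x) = x^(2^n-2) + x^(2^n-1) + (x+1)^(2^n-1)`. -/
def swappedInv {F : Type*} [Field F] (n : ℕ) (x : F) : F :=
  x ^ (2 ^ n - 2) + x ^ (2 ^ n - 1) + (x + 1) ^ (2 ^ n - 1)

/-- The `c`-DDT entry of the swapped inverse function at `(a, b)`: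
the number of `x` with `G(x+a) + c·G(x) = b`. -/
def cDDT (F : Type*) [Field F] [Fintype F] [DecidableEq F] (n : ℕ) (c a b : F) : ℕ :=
  (univ.filter (fun x : F => swappedInv n (x + a) + c * swappedInv n x = b)).card

/-- The `c`-BCT entry of the swapped inverse function at `(a, b)`:
the number of pairs `(x, γ)` with `G(x+γ) + c·G(x) = b` and `G(x+γ+a) + c⁻¹·G(x+a) = b`. -/
def cBCT (F : Type*) [Field F] [Fintype F] [DecidableEq F] (n : ℕ) (c a b : F) : ℕ :=
  (univ.filter (fun p : F × F =>
    swappedInv n (p.1 + p.2) + c * swappedInv n p.1 = b ∧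
    swappedInv n (p.1 + p.2 + a) + c⁻¹ * swappedInv n (p.1 + a) = b)).card

/-- The absolute trace map on a field with `2^n` elements: `Tr(x) = ∑_{i=0}^{n-1} x^(2^i)`. -/
def trF {F : Type*} [Field F] (n : ℕ) (x : F) : F :=
  ∑ i ∈ Finset.range n, x ^ (2 ^ i)

structure F8 where
  x0 : Bool
  x1 : Bool
  x2 : Bool
deriving DecidableEq

namespace F8

instance : Fintype F8 where
  elems := ⟨(([⟨false, false, false⟩, ⟨true, false, false⟩, ⟨false, true, false⟩, ⟨true, true, false⟩, ⟨false, false, true⟩, ⟨true, false, true⟩, ⟨false, true, true⟩, ⟨true, true, true⟩] : List F8) : Multiset F8), by decide⟩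
  complete := by rintro ⟨(_|_), (_|_), (_|_)⟩ <;> decide

instance : Zero F8 := ⟨⟨false, false, false⟩⟩
instance : One F8 := ⟨⟨true, false, false⟩⟩
instance : Add F8 := ⟨fun a b => ⟨xor a.x0 b.x0, xor a.x1 b.x1, xor a.x2 b.x2⟩⟩
instance : Neg F8 := ⟨id⟩
instance : Mul F8 := ⟨fun a b =>
  ⟨xor (a.x0 && b.x0) (xor (a.x1 && b.x2) (a.x2 && b.x1)),
   xor (a.x0 && b.x1) (xor (a.x1 && b.x0) (xor (a.x1 && b.x2) (xor (a.x2 && b.x1) (a.x2 && b.x2)))),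
   xor (a.x0 && b.x2) (xor (a.x1 && b.x1) (xor (a.x2 && b.x0) (a.x2 && b.x2)))⟩⟩
instance : Inv F8 := ⟨fun a => let s := a * a; s * (s * s)⟩

private lemma hadd_assoc : ∀ a b c : F8, a + b + c = a + (b + c) := by decide
private lemma hzero_add : ∀ a : F8, 0 + a = a := by decide
private lemma hadd_zero : ∀ a : F8, a + 0 = a := by decide
private lemma hadd_comm : ∀ a b : F8, a + b = b + a := by decide
private lemma hneg_add : ∀ a : F8, -a + a = 0 := by decide
private lemma hmul_assoc : ∀ a b c : F8, a * b * c = a * (b * c) := by decide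
private lemma hone_mul : ∀ a : F8, 1 * a = a := by decide
private lemma hmul_one : ∀ a : F8, a * 1 = a := by decide
private lemma hmul_comm : ∀ a b : F8, a * b = b * a := by decide
private lemma hleft : ∀ a b c : F8, a * (b + c) = a * b + a * c := by decide
private lemma hright : ∀ a b c : F8, (a + b) * c = a * c + b * c := by decide
private lemma hzero_mul : ∀ a : F8, 0 * a = 0 := by decide
private lemma hmul_zero : ∀ a : F8, a * 0 = 0 := by decide
private lemma hmul_inv : ∀ a : F8, a ≠ 0 → a * a⁻¹ = 1 := by decide
private lemma hinv_zero : (0 : F8)⁻¹ = 0 := by decide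

instance : Field F8 where
  nsmul := nsmulRec
  zsmul := zsmulRec
  add_assoc := hadd_assoc
  zero_add := hzero_add
  add_zero := hadd_zero
  add_comm := hadd_comm
  neg_add_cancel := hneg_add
  left_distrib := hleft
  right_distrib := hright
  zero_mul := hzero_mul
  mul_zero := hmul_zero
  mul_assoc := hmul_assoc
  one_mul := hone_mul
  mul_one := hmul_one
  mul_comm := hmul_comm
  mul_inv_cancel := hmul_inv
  inv_zero := hinv_zero
  exists_pair_ne := ⟨0, 1, by decide⟩
  nnqsmul := _
  qsmul := _

lemma card_F8 : Fintype.card F8 = 2 ^ 3 := rfl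

end F8

namespace SwappedInvAux

def g (x : F8) : F8 := if x = 0 then 1 else if x = 1 then 0 else x⁻¹

lemma swappedInv_eq_g : ∀ x : F8, swappedInv 3 x = g x := by
  have h2 : (2 : ℕ) ^ 3 - 2 = 6 := by norm_num
  have h1 : (2 : ℕ) ^ 3 - 1 = 7 := by norm_num
  simp only [swappedInv, h2, h1]
  decide

set_option maxHeartbeats 1000000 in
lemma keyg : ∀ c a b : F8, c ≠ 0 → c ≠ 1 →
    (univ.filter (fun x : F8 => g (x + a) + c * g x = b)).card ≤ 3 := by decide

lemma key : ∀ c a b : F8, c ≠ 0 → c ≠ 1 → cDDT F8 3 c a b ≤ 3 := by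
  intro c a b h0 h1
  have h := keyg c a b h0 h1
  simpa only [cDDT, swappedInv_eq_g] using h

lemma swappedInv_map {F K : Type*} [Field F] [Field K] (e : F ≃+* K) (n : ℕ) (x : F) :
    e (swappedInv n x) = swappedInv n (e x) := by
  simp [swappedInv, map_add, map_pow, map_one]

lemma cDDT_eq {F K : Type*} [Field F] [Fintype F] [DecidableEq F] [Field K] [Fintype K]
    [DecidableEq K] (e : F ≃+* K) (n : ℕ) (c a b : F) :
    cDDT F n c a b = cDDT K n (e c) (e a) (e b) := by
  unfold cDDT
  refine Finset.card_bij (fun x _ => e x) (fun x hx => ?_) (fun x _ y _ h => e.injective h)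
    (fun y hy => ⟨e.symm y, ?_, (e.apply_symm_apply y)⟩)
  · simp only [Finset.mem_filter, Finset.mem_univ, true_and] at hx ⊢
    rw [← hx, map_add, map_mul, swappedInv_map, swappedInv_map, map_add]
  · simp only [Finset.mem_filter, Finset.mem_univ, true_and] at hy ⊢
    apply e.injective
    rw [map_add, map_mul, swappedInv_map, swappedInv_map, map_add, e.apply_symm_apply, hy]

end SwappedInvAux

theorem stmt_1 (F : Type*) [Field F] [Fintype F] [DecidableEq F]
    (hF : Fintype.card F = 2 ^ 3)
    (c : F) (hc0 : c ≠ 0) (hc1 : c ≠ 1) :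
    ∀ a b : F, cDDT F 3 c a b ≤ 3 := by
  intro a b
  have hcard : Fintype.card F = Fintype.card F8 := by rw [hF, F8.card_F8]
  have e := FiniteField.ringEquivOfCardEq hcard
  rw [SwappedInvAux.cDDT_eq e]
  refine SwappedInvAux.key _ _ _ ?_ ?_
  · intro h; exact hc0 (e.injective (by rw [h, map_zero]))
  · intro h; exact hc1 (e.injective (by rw [h, map_one]))
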